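/- In the P system Π₂ of Theorem 2 (size (2,0,0;1,1,0), 5 membranes) simulating a context-free rule i: A → BC, starting from w₁Aw₂ in the skin membrane with no marker symbols present, the derivation w₁Aw₂ ⟹ w₁P¹_iP²_iAw₂ ⟹ w₁P¹_iP²_iw₂ ⟹ w₁BP³_iP¹_iP²_iw₂ ⟹ w₁BP³_iP²_iw₂ ⟹ w₁BP³_iP²_iP⁴_iCw₂ ⟹ w₁BP³_iP²_iCw₂ ⟹ w₁BP³_iCw₂ ⟹ w₁BCw₂ is a valid computation, ending with w₁BCw₂ in the skin membrane. -/

import Mathlib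

inductive Tar where
  | here | inn | out
deriving DecidableEq

/-- A rule of an insertion-deletion P system: contexts, the inserted/deleted
string, a flag (`true` = insertion, `false` = deletion) and a target. -/
structure PRule (V : Type) where
  lctx : List V
  rctx : List V
  str  : List V
  isIns : Bool
  tar : Tar

/-- Insertion rule `(u, α, v; tar)_a`. -/
def iRule {V : Type} (u α v : List V) (t : Tar) : PRule V := ⟨u, v, α, true, t⟩

/-- Deletion rule `(u, α, v; tar)_e`. -/
def dRule {V : Type} (u α v : List V) (t : Tar) : PRule V := ⟨u, v, α, false, t⟩

/-- `r.applies x y` : applying rule `r` to the string `x` can produce `y`. -/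
def PRule.applies {V : Type} (r : PRule V) (x y : List V) : Prop :=
  if r.isIns then
    ∃ x₁ x₂, x = x₁ ++ r.lctx ++ r.rctx ++ x₂ ∧
             y = x₁ ++ r.lctx ++ r.str ++ r.rctx ++ x₂
  else
    ∃ x₁ x₂, x = x₁ ++ r.lctx ++ r.str ++ r.rctx ++ x₂ ∧
             y = x₁ ++ r.lctx ++ r.rctx ++ x₂

/-- Size condition `(n,m,m';p,q,q')` on a rule. -/
def PRule.sizeOk {V : Type} (n m m' p q q' : ℕ) (r : PRule V) : Prop :=
  if r.isIns then r.str.length ≤ n ∧ r.lctx.length ≤ m ∧ r.rctx.length ≤ m'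
  else r.str.length ≤ p ∧ r.lctx.length ≤ q ∧ r.rctx.length ≤ q'

/-- An insertion-deletion P system with `k` linearly nested membranes
(region `0` is the skin membrane, region `i+1` is immediately inside region `i`),
terminal alphabet `T ⊆ V`, initial languages `M i` and rule sets `R i`. -/
structure PSys (V : Type) (k : ℕ) where
  T : Set V
  M : Fin k → Set (List V)
  R : Fin k → Set (PRule V)

/-- The region where a string produced in region `i` with target `t` is placed;
`none` means the string leaves the system (target `out` in the skin membrane). -/
def tarRegion {k : ℕ} (i : Fin k) : Tar → Option (Fin k)
  | Tar.here => some i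
  | Tar.inn => if h : i.val + 1 < k then some ⟨i.val + 1, h⟩ else none
  | Tar.out =>
      if 0 < i.val then some ⟨i.val - 1, Nat.lt_of_le_of_lt (Nat.sub_le _ _) i.isLt⟩
      else none

/-- `InReg Sys i w` : during some computation of `Sys`, the string `w` appears in
region `i` (strings persist in arbitrarily many copies, so reachability is the
appropriate semantics). -/
inductive InReg {V : Type} {k : ℕ} (Sys : PSys V k) : Fin k → List V → Prop where
  | init {i : Fin k} {w : List V} : w ∈ Sys.M i → InReg Sys i w
  | step {i j : Fin k} {w w' : List V} (r : PRule V) :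
      InReg Sys i w → r ∈ Sys.R i → r.applies w w' → tarRegion i r.tar = some j →
      InReg Sys j w'

/-- The language generated by `Sys`: all terminal strings sent out of the skin
membrane at any time during a computation. -/
def PLang {V : Type} {k : ℕ} (Sys : PSys V k) : Set (List V) :=
  {w | (∀ a ∈ w, a ∈ Sys.T) ∧
    ∃ (i : Fin k) (w' : List V) (r : PRule V),
      InReg Sys i w' ∧ i.val = 0 ∧ r ∈ Sys.R i ∧ r.tar = Tar.out ∧ r.applies w' w}

namespace InReg

variable {V : Type} {k : ℕ} {Sys : PSys V k} {i j : Fin k} {u α v x₁ x₂ w w' : List V} {t : Tar}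

theorem insert (hw : InReg Sys i w) (hr : iRule u α v t ∈ Sys.R i)
    (ht : tarRegion i t = some j) (hx : w = x₁ ++ u ++ v ++ x₂)
    (hy : w' = x₁ ++ u ++ α ++ v ++ x₂) : InReg Sys j w' :=
  step _ hw hr ⟨x₁, x₂, hx, hy⟩ ht

theorem delete (hw : InReg Sys i w) (hr : dRule u α v t ∈ Sys.R i)
    (ht : tarRegion i t = some j) (hx : w = x₁ ++ u ++ α ++ v ++ x₂)
    (hy : w' = x₁ ++ u ++ v ++ x₂) : InReg Sys j w' :=
  step _ hw hr ⟨x₁, x₂, hx, hy⟩ ht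

end InReg

/-- in the P system `Π₂` of Theorem 2 (5 nested membranes,
size (2,0,0;1,1,0)), simulating the context-free rule `i : A → BC`: starting
from `w₁Aw₂` in the skin membrane, the derivation
`w₁Aw₂ ⟹ w₁P¹P²Aw₂ ⟹ w₁P¹P²w₂ ⟹ w₁BP³P¹P²w₂ ⟹ w₁BP³P²w₂ ⟹ w₁BP³P²P⁴Cw₂ ⟹
 w₁BP³P²Cw₂ ⟹ w₁BP³Cw₂ ⟹ w₁BCw₂` is a valid computation ending with
`w₁BCw₂` in the skin membrane. -/
theorem stmt12 {V : Type} (Sys : PSys V 5) (A B C P1 P2 P3 P4 : V) (w1 w2 : List V)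
    (h1 : iRule [] [P1, P2] [] Tar.inn ∈ Sys.R 0)
    (h2 : dRule [P2] [A] [] Tar.inn ∈ Sys.R 1)
    (h3 : dRule [] [P3] [] Tar.out ∈ Sys.R 1)
    (h4 : iRule [] [B, P3] [] Tar.inn ∈ Sys.R 2)
    (h5 : dRule [P3] [P2] [] Tar.out ∈ Sys.R 2)
    (h6 : dRule [P3] [P1] [] Tar.inn ∈ Sys.R 3)
    (h7 : dRule [P2] [P4] [] Tar.out ∈ Sys.R 3)
    (h8 : iRule [] [P4, C] [] Tar.out ∈ Sys.R 4)
    (h0 : InReg Sys 0 (w1 ++ [A] ++ w2)) :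
    InReg Sys 1 (w1 ++ [P1, P2, A] ++ w2) ∧
    InReg Sys 2 (w1 ++ [P1, P2] ++ w2) ∧
    InReg Sys 3 (w1 ++ [B, P3, P1, P2] ++ w2) ∧
    InReg Sys 4 (w1 ++ [B, P3, P2] ++ w2) ∧
    InReg Sys 3 (w1 ++ [B, P3, P2, P4, C] ++ w2) ∧
    InReg Sys 2 (w1 ++ [B, P3, P2, C] ++ w2) ∧
    InReg Sys 1 (w1 ++ [B, P3, C] ++ w2) ∧
    InReg Sys 0 (w1 ++ [B, C] ++ w2) := by
  have s1 : InReg Sys 1 (w1 ++ [P1, P2, A] ++ w2) :=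
    h0.insert h1 rfl (x₁ := w1) (x₂ := A :: w2) (by simp) (by simp)
  have s2 : InReg Sys 2 (w1 ++ [P1, P2] ++ w2) :=
    s1.delete h2 rfl (x₁ := w1 ++ [P1]) (x₂ := w2) (by simp) (by simp)
  have s3 : InReg Sys 3 (w1 ++ [B, P3, P1, P2] ++ w2) :=
    s2.insert h4 rfl (x₁ := w1) (x₂ := P1 :: P2 :: w2) (by simp) (by simp)
  have s4 : InReg Sys 4 (w1 ++ [B, P3, P2] ++ w2) :=
    s3.delete h6 rfl (x₁ := w1 ++ [B]) (x₂ := P2 :: w2) (by simp) (by simp)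
  have s5 : InReg Sys 3 (w1 ++ [B, P3, P2, P4, C] ++ w2) :=
    s4.insert h8 rfl (x₁ := w1 ++ [B, P3, P2]) (x₂ := w2) (by simp) (by simp)
  have s6 : InReg Sys 2 (w1 ++ [B, P3, P2, C] ++ w2) :=
    s5.delete h7 rfl (x₁ := w1 ++ [B, P3]) (x₂ := C :: w2) (by simp) (by simp)
  have s7 : InReg Sys 1 (w1 ++ [B, P3, C] ++ w2) :=
    s6.delete h5 rfl (x₁ := w1 ++ [B]) (x₂ := C :: w2) (by simp) (by simp)
  have s8 : InReg Sys 0 (w1 ++ [B, C] ++ w2) :=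
    s7.delete h3 rfl (x₁ := w1 ++ [B]) (x₂ := C :: w2) (by simp) (by simp)
  exact ⟨s1, s2, s3, s4, s5, s6, s7, s8⟩
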